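/- arXiv:1611.07170 — 2 statements merged into one kernel-verified Lean document; each statement's English description precedes it below -/
import Mathlib

section
/- Let M(λ) ∈ F[λ]^{(q+1)m×(p+1)n} be a pencil whose body satisfies the AS condition for P(λ) = Σ_{i=0}^{k} A_i λ^i with k = p+q+1, i.e., AS(M,s) = A_s for s = 0,...,k. Then the matrix polynomial (Λ_q(λ) ⊗ I_m) M(λ) (Λ_p(λ)^T ⊗ I_n) equals P(λ). -/
open Polynomial Matrix Kronecker

/-- The row vector `Λ_r(λ) = [λ^r, ..., λ, 1]`. -/
noncomputable def LamPoly (F : Type*) [Field F] (r : ℕ) :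
    Matrix (Fin 1) (Fin (r+1)) (Polynomial F) :=
  Matrix.of fun _ j => X ^ (r - (j : ℕ))

private lemma collapse {F : Type*} [Field F] (k : ℕ) (c : F) (t : ℕ) (ht : t ≤ k) :
    (∑ s : Fin (k+1), (if t + (s : ℕ) = k then Polynomial.C c else 0) * X ^ (s : ℕ))
      = Polynomial.C c * X ^ (k - t) := by
  rw [Finset.sum_eq_single (⟨k - t, by omega⟩ : Fin (k+1))]
  · simp; omega
  · intro s _ hs
    rw [if_neg, zero_mul]
    intro h
    exact hs (Fin.ext (by simp; omega))
  · simp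

/-- If the pencil `M(λ) = λ M₁ + M₀ ∈ F[λ]^{(q+1)m×(p+1)n}` satisfies the antidiagonal
sum (AS) condition for `P(λ) = Σ_{i=0}^{k} A_i λ^i` with `k = p+q+1`, then
`(Λ_q(λ) ⊗ I_m) M(λ) (Λ_p(λ)ᵀ ⊗ Iₙ) = P(λ)` entrywise. -/
theorem AS_condition_gives_P (F : Type*) [Field F] (m n p q : ℕ)
    (M1 M0 : Matrix (Fin (q+1) × Fin m) (Fin (p+1) × Fin n) F)
    (A : Fin (p+q+2) → Matrix (Fin m) (Fin n) F)
    (hAS : ∀ s : Fin (p+q+2),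
      (∑ i : Fin (q+1), ∑ j : Fin (p+1),
        ((if (i : ℕ) + (j : ℕ) + (s : ℕ) = p + q + 1 then
            (Matrix.of fun a b => M1 (i, a) (j, b) : Matrix (Fin m) (Fin n) F) else 0) +
          (if (i : ℕ) + (j : ℕ) + (s : ℕ) + 1 = p + q + 1 then
            (Matrix.of fun a b => M0 (i, a) (j, b) : Matrix (Fin m) (Fin n) F) else 0)))
        = A s) :
    ∀ (a : Fin m) (b : Fin n),
      (((LamPoly F q) ⊗ₖ (1 : Matrix (Fin m) (Fin m) (Polynomial F))) *
        (Matrix.of fun rc cc => Polynomial.C (M1 rc cc) * X + Polynomial.C (M0 rc cc) :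
          Matrix (Fin (q+1) × Fin m) (Fin (p+1) × Fin n) (Polynomial F)) *
        ((LamPoly F p) ⊗ₖ (1 : Matrix (Fin n) (Fin n) (Polynomial F)))ᵀ) ((0 : Fin 1), a)
          ((0 : Fin 1), b) =
      ∑ s : Fin (p+q+2), Polynomial.C (A s a b) * X ^ (s : ℕ) := by
  intro a b
  -- LHS computation
  have hL :
      (((LamPoly F q) ⊗ₖ (1 : Matrix (Fin m) (Fin m) (Polynomial F))) *
        (Matrix.of fun rc cc => Polynomial.C (M1 rc cc) * X + Polynomial.C (M0 rc cc) :
          Matrix (Fin (q+1) × Fin m) (Fin (p+1) × Fin n) (Polynomial F)) *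
        ((LamPoly F p) ⊗ₖ (1 : Matrix (Fin n) (Fin n) (Polynomial F)))ᵀ) ((0 : Fin 1), a)
          ((0 : Fin 1), b) =
      ∑ i : Fin (q+1), ∑ j : Fin (p+1),
        (C (M1 (i,a) (j,b)) * X ^ (q - (i:ℕ) + (p - (j:ℕ)) + 1)
          + C (M0 (i,a) (j,b)) * X ^ (q - (i:ℕ) + (p - (j:ℕ)))) := by
    simp only [Matrix.mul_apply, Fintype.sum_prod_type, kroneckerMap_apply, transpose_apply,
      LamPoly, of_apply, one_apply, mul_ite, ite_mul, mul_zero, zero_mul, mul_one,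
      Finset.sum_ite_eq, Finset.sum_ite_eq', Finset.mem_univ, if_true]
    simp only [Finset.sum_mul]
    rw [Finset.sum_comm]
    refine Finset.sum_congr rfl fun i _ => Finset.sum_congr rfl fun j _ => ?_
    ring
  rw [hL]
  -- RHS computation
  have hR : ∀ s : Fin (p+q+2), A s a b =
      ∑ i : Fin (q+1), ∑ j : Fin (p+1),
        ((if (i : ℕ) + (j : ℕ) + (s : ℕ) = p + q + 1 then M1 (i, a) (j, b) else 0) +
         (if (i : ℕ) + (j : ℕ) + (s : ℕ) + 1 = p + q + 1 then M0 (i, a) (j, b) else 0)) := by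
    intro s
    rw [← hAS s]
    simp [Matrix.sum_apply, Matrix.add_apply, apply_ite (fun M : Matrix (Fin m) (Fin n) F => M a b)]
  have : (∑ s : Fin (p+q+2), Polynomial.C (A s a b) * X ^ (s : ℕ)) =
      ∑ s : Fin (p+q+2), (∑ i : Fin (q+1), ∑ j : Fin (p+1),
        (Polynomial.C ((if (i : ℕ) + (j : ℕ) + (s : ℕ) = p + q + 1 then M1 (i, a) (j, b) else 0) +
         (if (i : ℕ) + (j : ℕ) + (s : ℕ) + 1 = p + q + 1 then M0 (i, a) (j, b) else 0)))
          * X ^ (s : ℕ)) := by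
    refine Finset.sum_congr rfl fun s _ => ?_
    rw [hR s, map_sum]
    simp only [map_sum, Finset.sum_mul]
  rw [this]
  have this2 : ∀ (g : Fin (p+q+2) → Fin (q+1) → Fin (p+1) → Polynomial F),
      (∑ s, ∑ i, ∑ j, g s i j) = ∑ i, ∑ j, ∑ s, g s i j := by
    intro g
    rw [Finset.sum_comm]
    exact Finset.sum_congr rfl fun i _ => Finset.sum_comm ..
  rw [this2]
  refine Finset.sum_congr rfl fun i _ => Finset.sum_congr rfl fun j _ => ?_
  simp only [map_add, apply_ite Polynomial.C, map_zero, add_mul]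
  rw [Finset.sum_add_distrib]
  have h1 := collapse (p+q+1) (M1 (i,a) (j,b)) ((i:ℕ)+(j:ℕ)) (by omega)
  have h2 := collapse (p+q+1) (M0 (i,a) (j,b)) ((i:ℕ)+(j:ℕ)+1) (by omega)
  have hc : ∀ s : Fin (p+q+2), ((i:ℕ)+(j:ℕ)+(s:ℕ)+1 = p+q+1) = ((i:ℕ)+(j:ℕ)+1+(s:ℕ) = p+q+1) := by
    intro s; congr 1; omega
  simp only [hc]
  rw [h1, h2]
  have e1 : p + q + 1 - ((i:ℕ)+(j:ℕ)) = q - (i:ℕ) + (p - (j:ℕ)) + 1 := by omega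
  have e2 : p + q + 1 - ((i:ℕ)+(j:ℕ)+1) = q - (i:ℕ) + (p - (j:ℕ)) := by omega
  rw [e1, e2]
end

section
/- Let C(λ) ∈ F[λ]^{kn×kn} be an extended block Kronecker pencil with body M(λ) ∈ F[λ]^{(q+1)n×(p+1)n}, k = p+q+1, and wing-pencil blocks K_1(λ), K_2(λ). If M(λ) satisfies the AS condition for P(λ) = Σ_{i=0}^k A_i λ^i, then C(λ) satisfies the AS condition for λ^{k-1} P(λ): AS(C,s) = 0 for s = 0,...,k−2 and AS(C,s) = A_{s−k+1} for s = k−1,...,2k−1. -/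
open Polynomial Matrix Kronecker

/-- The extended block Kronecker pencil `C(λ) = [[M(λ), K₂(λ)ᵀ],[K₁(λ), 0]]`. -/
noncomputable def extBlockKron {F : Type*} [Field F] {n p q : ℕ}
    (M : Matrix (Fin (q+1) × Fin n) (Fin (p+1) × Fin n) (Polynomial F))
    (K1 : Matrix (Fin p × Fin n) (Fin (p+1) × Fin n) (Polynomial F))
    (K2 : Matrix (Fin q × Fin n) (Fin (q+1) × Fin n) (Polynomial F)) :
    Matrix ((Fin (q+1) ⊕ Fin p) × Fin n) ((Fin (p+1) ⊕ Fin q) × Fin n) (Polynomial F) :=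
  Matrix.of fun rc cc =>
    match rc.1, cc.1 with
    | Sum.inl i, Sum.inl j => M (i, rc.2) (j, cc.2)
    | Sum.inl i, Sum.inr j => K2 (j, cc.2) (i, rc.2)
    | Sum.inr i, Sum.inl j => K1 (i, rc.2) (j, cc.2)
    | Sum.inr _, Sum.inr _ => 0

/-- Position (0-indexed) of a block-row of `C(λ)` among its `k = p+q+1` block-rows. -/
def rowPos (p q : ℕ) : Fin (q+1) ⊕ Fin p → ℕ := Sum.elim (fun i => (i : ℕ)) (fun i => q + 1 + (i : ℕ))

/-- Position (0-indexed) of a block-column of `C(λ)` among its `k = p+q+1` block-columns. -/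
def colPos (p q : ℕ) : Fin (p+1) ⊕ Fin q → ℕ := Sum.elim (fun j => (j : ℕ)) (fun j => p + 1 + (j : ℕ))

/-!
Weight the `(r, c)` block entry of a pencil by `λ^(D - (pos r + pos c))`. For entries of degree at
most one, `AS(·, s)` is a single coefficient of the weighted sum of all entries, which is
`(Λ ⊗ Iₙ) C(λ) (Λᵀ ⊗ Iₙ)` up to a power of `λ`. The wing property kills the contributions of
`K₁(λ)` and `K₂(λ)ᵀ` to this sum, so the weighted sums of `C(λ)` and of its body `M(λ)` agree.
Read in `M(λ)`, with its `p + q + 1` block antidiagonals instead of `2k - 1`, the same coefficient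
is the AS sum `p + q` places earlier, and the first `p + q` AS sums of `C(λ)` vanish.
-/

section PencilCoeff

variable {R : Type*} [Semiring R]

theorem ite_coeff_one_add_ite_coeff_zero_eq_coeff_mul_X_pow {f : R[X]} (hf : f.natDegree ≤ 1)
    {d D m : ℕ} (hd : d ≤ D) {P₁ P₀ : Prop} [Decidable P₁] [Decidable P₀]
    (h₁ : P₁ ↔ d + m = D + 1) (h₀ : P₀ ↔ d + m = D) :
    ((if P₁ then f.coeff 1 else 0) + if P₀ then f.coeff 0 else 0) = (f * X ^ (D - d)).coeff m := by
  rw [coeff_mul_X_pow']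
  by_cases hm : D - d ≤ m
  · rw [if_pos hm]
    obtain h | h | h : m - (D - d) = 1 ∨ m - (D - d) = 0 ∨ 1 < m - (D - d) := by omega
    · rw [h, if_pos (h₁.2 (by omega)), if_neg (fun hP => by have := h₀.1 hP; omega), add_zero]
    · rw [h, if_neg (fun hP => by have := h₁.1 hP; omega), if_pos (h₀.2 (by omega)), zero_add]
    · rw [if_neg (fun hP => by have := h₁.1 hP; omega), if_neg (fun hP => by have := h₀.1 hP; omega),
        coeff_eq_zero_of_natDegree_lt (hf.trans_lt h), add_zero]
  · rw [if_neg hm, if_neg (fun hP => by have := h₁.1 hP; omega),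
      if_neg (fun hP => by have := h₀.1 hP; omega), add_zero]

theorem coeff_sum_mul_X_pow_eq_zero {ι : Type*} (s : Finset ι) (f : ι → R[X]) (e : ι → ℕ) {m : ℕ}
    (hm : ∀ i ∈ s, m < e i) : (∑ i ∈ s, f i * X ^ e i).coeff m = 0 := by
  rw [finsetSum_coeff]
  exact Finset.sum_eq_zero fun i hi => by rw [coeff_mul_X_pow', if_neg (hm i hi).not_ge]

end PencilCoeff

theorem wing_sum_mul_X_pow_eq_zero {F : Type*} [Field F] {n P : ℕ} {ρ : Type*}
    {K : Matrix (ρ × Fin n) (Fin (P+1) × Fin n) F[X]}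
    (hK : K * ((LamPoly F P)ᵀ ⊗ₖ (1 : Matrix (Fin n) (Fin n) F[X])) = 0)
    (r : ρ) (a b : Fin n) {e : ℕ} (he : P ≤ e) :
    ∑ j : Fin (P+1), K (r, a) (j, b) * X ^ (e - j) = 0 := by
  have hrow : ∑ j : Fin (P+1), K (r, a) (j, b) * X ^ (P - j) = 0 := by
    have h := congr_fun₂ hK (r, a) (0, b)
    rw [mul_apply, Fintype.sum_prod_type] at h
    simpa [LamPoly, one_apply] using h
  calc ∑ j : Fin (P+1), K (r, a) (j, b) * X ^ (e - j)
      = X ^ (e - P) * ∑ j : Fin (P+1), K (r, a) (j, b) * X ^ (P - j) := by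
        rw [Finset.mul_sum]
        refine Finset.sum_congr rfl fun j _ => ?_
        rw [mul_left_comm, ← pow_add, Nat.sub_add_sub_cancel he (by omega)]
    _ = 0 := by rw [hrow, mul_zero]

section ExtBlockKron

variable {F : Type*} [Field F] {n p q : ℕ}
  {M : Matrix (Fin (q+1) × Fin n) (Fin (p+1) × Fin n) F[X]}
  {K1 : Matrix (Fin p × Fin n) (Fin (p+1) × Fin n) F[X]}
  {K2 : Matrix (Fin q × Fin n) (Fin (q+1) × Fin n) F[X]}

theorem rowPos_le (r : Fin (q+1) ⊕ Fin p) : rowPos p q r ≤ p + q := by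
  cases r <;> simp only [rowPos, Sum.elim_inl, Sum.elim_inr] <;> omega

theorem colPos_le (c : Fin (p+1) ⊕ Fin q) : colPos p q c ≤ p + q := by
  cases c <;> simp only [colPos, Sum.elim_inl, Sum.elim_inr] <;> omega

theorem natDegree_extBlockKron_le (hM : ∀ r c, (M r c).natDegree ≤ 1)
    (hK1 : ∀ r c, (K1 r c).natDegree ≤ 1) (hK2 : ∀ r c, (K2 r c).natDegree ≤ 1) (r c) :
    (extBlockKron M K1 K2 r c).natDegree ≤ 1 := by
  obtain ⟨r | r, a⟩ := r <;> obtain ⟨c | c, b⟩ := c <;> simp [extBlockKron, *]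

theorem sum_extBlockKron_mul_X_pow
    (hK1 : K1 * ((LamPoly F p)ᵀ ⊗ₖ (1 : Matrix (Fin n) (Fin n) F[X])) = 0)
    (hK2 : K2 * ((LamPoly F q)ᵀ ⊗ₖ (1 : Matrix (Fin n) (Fin n) F[X])) = 0)
    (a b : Fin n) {D : ℕ} (hD : 2 * (p + q) ≤ D) :
    ∑ r, ∑ c, extBlockKron M K1 K2 (r, a) (c, b) * X ^ (D - (rowPos p q r + colPos p q c)) =
      ∑ i : Fin (q+1), ∑ j : Fin (p+1), M (i, a) (j, b) * X ^ (D - (i + j)) := by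
  have hK1_block : ∀ i : Fin p,
      ∑ j : Fin (p+1), K1 (i, a) (j, b) * X ^ (D - (q + 1 + i + j)) = 0 := fun i => by
    simp only [← Nat.sub_sub]
    exact wing_sum_mul_X_pow_eq_zero hK1 i a b (by omega)
  have hK2_block : ∑ i : Fin (q+1), ∑ j : Fin q,
      K2 (j, b) (i, a) * X ^ (D - (i + (p + 1 + j))) = 0 := by
    rw [Finset.sum_comm]
    refine Finset.sum_eq_zero fun j _ => ?_
    rw [← wing_sum_mul_X_pow_eq_zero hK2 j b a (e := D - (p + 1 + j)) (by omega)]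
    exact Finset.sum_congr rfl fun i _ => by rw [Nat.sub_sub, add_comm (i : ℕ)]
  simp only [Fintype.sum_sum_type, extBlockKron, of_apply, rowPos, colPos, Sum.elim_inl,
    Sum.elim_inr, zero_mul, Finset.sum_const_zero, add_zero, Finset.sum_add_distrib]
  simp only [hK1_block, hK2_block, Finset.sum_const_zero, add_zero]

end ExtBlockKron

/-- If the body `M(λ)` of an extended block Kronecker pencil `C(λ)` satisfies the AS
condition for `P(λ) = Σ_{i=0}^{k} A_i λ^i`, `k = p+q+1`, then `C(λ)`, viewed as a `k×k`
block pencil, satisfies the AS condition for `λ^{k-1} P(λ)`: `AS(C,s) = 0` for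
`s = 0,…,k-2` and `AS(C,s) = A_{s-k+1}` for `s = k-1,…,2k-1`. -/
theorem extBlockKron_AS_shifted (F : Type*) [Field F] (n p q : ℕ)
    (M : Matrix (Fin (q+1) × Fin n) (Fin (p+1) × Fin n) (Polynomial F))
    (K1 : Matrix (Fin p × Fin n) (Fin (p+1) × Fin n) (Polynomial F))
    (K2 : Matrix (Fin q × Fin n) (Fin (q+1) × Fin n) (Polynomial F))
    (hMpencil : ∀ r c, (M r c).natDegree ≤ 1)
    (hK1pencil : ∀ r c, (K1 r c).natDegree ≤ 1)
    (hK2pencil : ∀ r c, (K2 r c).natDegree ≤ 1)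
    (hK1wing : K1 * ((LamPoly F p)ᵀ ⊗ₖ (1 : Matrix (Fin n) (Fin n) (Polynomial F))) = 0)
    (hK2wing : K2 * ((LamPoly F q)ᵀ ⊗ₖ (1 : Matrix (Fin n) (Fin n) (Polynomial F))) = 0)
    (A : Fin (p+q+2) → Matrix (Fin n) (Fin n) F)
    (hAS : ∀ (s : Fin (p+q+2)) (a b : Fin n),
      (∑ i : Fin (q+1), ∑ j : Fin (p+1),
        ((if (i : ℕ) + (j : ℕ) + (s : ℕ) = p + q + 1 then (M (i, a) (j, b)).coeff 1 else 0) +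
          (if (i : ℕ) + (j : ℕ) + (s : ℕ) + 1 = p + q + 1 then (M (i, a) (j, b)).coeff 0 else 0)))
        = A s a b) :
    ∀ (s : ℕ) (hs : s < 2 * (p + q + 1)) (a b : Fin n),
      (∑ r : Fin (q+1) ⊕ Fin p, ∑ c : Fin (p+1) ⊕ Fin q,
        ((if rowPos p q r + colPos p q c + s + 1 = 2 * (p + q + 1) then
            (extBlockKron M K1 K2 (r, a) (c, b)).coeff 1 else 0) +
          (if rowPos p q r + colPos p q c + s + 2 = 2 * (p + q + 1) then
            (extBlockKron M K1 K2 (r, a) (c, b)).coeff 0 else 0)))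
        = if h : p + q ≤ s then A ⟨s - (p + q), by omega⟩ a b else 0 := by
  intro s hs a b
  have hC := natDegree_extBlockKron_le hMpencil hK1pencil hK2pencil
  calc _ = (∑ r, ∑ c, extBlockKron M K1 K2 (r, a) (c, b) *
          X ^ (2 * (p + q + 1) - (rowPos p q r + colPos p q c))).coeff (s + 2) := by
        simp only [finsetSum_coeff]
        refine Finset.sum_congr rfl fun r _ => Finset.sum_congr rfl fun c _ => ?_
        have := rowPos_le r; have := colPos_le c
        exact ite_coeff_one_add_ite_coeff_zero_eq_coeff_mul_X_pow (hC _ _) (by omega)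
          (by omega) (by omega)
    _ = (∑ i : Fin (q+1), ∑ j : Fin (p+1),
          M (i, a) (j, b) * X ^ (2 * (p + q + 1) - (i + j))).coeff (s + 2) := by
        rw [sum_extBlockKron_mul_X_pow hK1wing hK2wing a b (by omega)]
    _ = _ := by
        split_ifs with hps
        · rw [← hAS, finsetSum_coeff]
          refine Finset.sum_congr rfl fun i _ => ?_
          rw [finsetSum_coeff]
          refine Finset.sum_congr rfl fun j _ => ?_
          exact (ite_coeff_one_add_ite_coeff_zero_eq_coeff_mul_X_pow (hMpencil _ _)
            (by omega) (by simp only; omega) (by simp only; omega)).symm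
        · rw [finsetSum_coeff]
          exact Finset.sum_eq_zero fun i _ => coeff_sum_mul_X_pow_eq_zero _ _ _ fun j _ => by omega
end
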